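/- Let n be a positive even integer and let B be a nonempty finite set of binary words in 𝔽₂^n. Let λ : ℕ → ℝ be defined by λ(0) = 0 and λ(2i−1) = λ(2i) = 2^{n−2i}·i·C(2i, i) for every integer i ≥ 1, where C(2i,i) is the central binomial coefficient. Then Σ_{x∈B} Σ_{y∈B} λ(d_H(x, y)) ≤ 2^{n−1}·√(n/π) · Σ_{x∈B} Σ_{y∈B} ‖x̃ − ỹ‖, where d_H is the Hamming distance. -/

import Mathlib

/-!
Wallis' inequality gives `C(2i,i) ≤ 4ⁱ / √(π i)`, hence `λ(d) ≤ 2ⁿ √(d/π)` (as `i ≤ d` when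
`d ∈ {2i−1, 2i}`), while `‖x̃ − ỹ‖ = 2 √(d_H(x,y)/n)`. So the inequality holds term by term.
-/

/-- The spherical embedding of a binary word `x ∈ 𝔽₂ⁿ`: the unit vector with
coordinates `x̃ⱼ = (−1)^{xⱼ}/√n`. -/
noncomputable def binEmbed {n : ℕ} (x : Fin n → ZMod 2) : EuclideanSpace ℝ (Fin n) :=
  WithLp.toLp 2 (fun j => (-1 : ℝ) ^ ((x j).val) / Real.sqrt n)

open Real Finset

lemma Nat.centralBinom_mul_factorial_sq (i : ℕ) :
    i.centralBinom * i.factorial ^ 2 = (2 * i).factorial := by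
  rw [Nat.centralBinom_eq_two_mul_choose, sq, ← mul_assoc, two_mul,
    Nat.add_choose_mul_factorial_mul_factorial]

/-- From the Wallis bound `(2i+1)/(2i+2) · π/2 ≤ W i = 16ⁱ / (C(2i,i)² (2i+1))`. -/
lemma Nat.centralBinom_sq_mul_pi_mul_le (i : ℕ) :
    (i.centralBinom : ℝ) ^ 2 * (π * i) ≤ 16 ^ i := by
  have hC : (0 : ℝ) < i.centralBinom := mod_cast i.centralBinom_pos
  have hW : Wallis.W i * ((i.centralBinom : ℝ) ^ 2 * (2 * i + 1)) = 16 ^ i := by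
    rw [Wallis.W_eq_factorial_ratio, ← Nat.centralBinom_mul_factorial_sq, pow_mul]
    push_cast
    field_simp
    norm_num
  have hle := mul_le_mul_of_nonneg_right (Wallis.le_W i)
    (by positivity : (0 : ℝ) ≤ (i.centralBinom : ℝ) ^ 2 * (2 * i + 1))
  rw [hW, div_mul_eq_mul_div, div_mul_eq_mul_div, div_le_iff₀ (by positivity)] at hle
  nlinarith [pi_pos, mul_pos pi_pos (mul_pos hC hC)]

lemma Nat.mul_centralBinom_div_four_pow_le (i : ℕ) :
    i * i.centralBinom / (4 : ℝ) ^ i ≤ √(i / π) := by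
  rw [Real.le_sqrt (by positivity) (by positivity), div_pow, mul_pow,
    div_le_div_iff₀ (by positivity) pi_pos, ← pow_mul, mul_comm i 2, pow_mul]
  norm_num
  nlinarith [Nat.centralBinom_sq_mul_pi_mul_le i, (i.cast_nonneg : (0 : ℝ) ≤ i)]

lemma sq_neg_one_pow_val_sub_neg_one_pow_val (a b : ZMod 2) :
    ((-1 : ℝ) ^ a.val - (-1) ^ b.val) ^ 2 = if a = b then 0 else 4 := by
  have h01 : ∀ c : ZMod 2, c = 0 ∨ c = 1 := by decide
  rcases h01 a with rfl | rfl <;> rcases h01 b with rfl | rfl <;> norm_num [ZMod.val_one]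

lemma norm_binEmbed_sub_binEmbed {n : ℕ} (x y : Fin n → ZMod 2) :
    ‖binEmbed x - binEmbed y‖ = 2 * √(hammingDist x y / n) := by
  have hcoord (j : Fin n) : ‖(binEmbed x - binEmbed y) j‖ ^ 2 =
      if x j = y j then (0 : ℝ) else 4 / n := by
    simp only [binEmbed, PiLp.sub_apply, ← sub_div, norm_div, Real.norm_eq_abs, div_pow, sq_abs,
      sq_sqrt n.cast_nonneg, sq_neg_one_pow_val_sub_neg_one_pow_val]
    split_ifs <;> simp
  have hsum : ∑ j, ‖(binEmbed x - binEmbed y) j‖ ^ 2 = 2 ^ 2 * (hammingDist x y / n) := by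
    rw [sum_congr rfl fun j _ => hcoord j, sum_ite, sum_const_zero, sum_const, zero_add,
      nsmul_eq_mul, ← hammingDist]
    ring
  rw [EuclideanSpace.norm_eq, hsum, sqrt_mul' _ (by positivity), sqrt_sq zero_le_two]

lemma lam_le_two_pow_mul_sqrt_div_pi (n : ℕ) (lam : ℕ → ℝ) (hlam0 : lam 0 = 0)
    (hlam : ∀ i : ℕ, 1 ≤ i →
      lam (2 * i - 1) = (2 : ℝ) ^ ((n : ℤ) - 2 * i) * i * Nat.choose (2 * i) i ∧
      lam (2 * i) = (2 : ℝ) ^ ((n : ℤ) - 2 * i) * i * Nat.choose (2 * i) i)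
    (d : ℕ) : lam d ≤ 2 ^ n * √(d / π) := by
  obtain rfl | hd := d.eq_zero_or_pos
  · simp [hlam0]
  set i := (d + 1) / 2
  have hlam_d : lam d = 2 ^ n * (i * i.centralBinom / (4 : ℝ) ^ i) := by
    have hdi : d = 2 * i - 1 ∨ d = 2 * i := by omega
    have hpow : (2 : ℝ) ^ ((n : ℤ) - 2 * i) = 2 ^ n / 4 ^ i := by
      rw [zpow_sub₀ two_ne_zero, zpow_natCast, zpow_mul, show (2 : ℝ) ^ (2 : ℤ) = 4 by norm_num,
        zpow_natCast]
    obtain ⟨hodd, heven⟩ := hlam i (by omega)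
    rw [Nat.centralBinom_eq_two_mul_choose]
    rcases hdi with h | h <;> rw [h] <;> simp only [hodd, heven, hpow] <;> ring
  have hid : (i : ℝ) ≤ d := mod_cast (show i ≤ d by omega)
  rw [hlam_d]
  gcongr
  exact (Nat.mul_centralBinom_div_four_pow_le i).trans (by gcongr)

theorem lambda_sum_le_sum_dist (n : ℕ) (hn : 0 < n)
    (B : Finset (Fin n → ZMod 2))
    (lam : ℕ → ℝ) (hlam0 : lam 0 = 0)
    (hlam : ∀ i : ℕ, 1 ≤ i →
      lam (2 * i - 1) = (2 : ℝ) ^ ((n : ℤ) - 2 * i) * i * Nat.choose (2 * i) i ∧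
      lam (2 * i) = (2 : ℝ) ^ ((n : ℤ) - 2 * i) * i * Nat.choose (2 * i) i) :
    ∑ x ∈ B, ∑ y ∈ B, lam (hammingDist x y) ≤
      (2 : ℝ) ^ (n - 1) * Real.sqrt ((n : ℝ) / Real.pi) *
        ∑ x ∈ B, ∑ y ∈ B, ‖binEmbed x - binEmbed y‖ := by
  have hn' : (0 : ℝ) < n := mod_cast hn
  have hpair (x y : Fin n → ZMod 2) : lam (hammingDist x y) ≤
      2 ^ (n - 1) * √(n / π) * ‖binEmbed x - binEmbed y‖ := by
    set d := hammingDist x y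
    calc lam d ≤ 2 ^ n * √(d / π) := lam_le_two_pow_mul_sqrt_div_pi n lam hlam0 hlam d
      _ = 2 ^ (n - 1) * 2 * √(n / π * (d / n)) := by
        rw [← pow_succ, Nat.sub_add_cancel hn]
        field_simp
      _ = 2 ^ (n - 1) * √(n / π) * ‖binEmbed x - binEmbed y‖ := by
        rw [norm_binEmbed_sub_binEmbed, sqrt_mul (by positivity)]
        ring
  simp_rw [mul_sum]
  exact sum_le_sum fun x _ => sum_le_sum fun y _ => hpair x y
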